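/- arXiv:1803.11034 — 5 statements merged into one kernel-verified Lean document; each statement's English description precedes it below -/
import Mathlib

section
/- The set Δ(Σ) of all distributions of a finite alphabet Σ, partially ordered by ≤_Σ, is a lattice. Concretely, for any two distributions Δ = (Σ_1, …, Σ_n) and Δ' = (Σ'_1, …, Σ'_k) of Σ: (i) the distribution obtained from the family {Σ_i ∩ Σ'_j : i ∈ [1,n], j ∈ [1,k]} by keeping only its maximal members (under set inclusion) is the greatest lower bound of Δ and Δ' with respect to ≤_Σ; and (ii) the distribution whose components are the maximal members (under set inclusion) of the family consisting of all components of Δ and all components of Δ' is the least upper bound of Δ and Δ' with respect to ≤_Σ. -/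
/-- A *distribution* of the (finite) alphabet `α`: a family of non-empty,
pairwise incomparable (under set inclusion) sub-alphabets whose union is `α`.
Its size is `comps.ncard`. -/
structure Distr (α : Type) [Fintype α] where
  comps : Set (Set α)
  comps_nonempty : ∀ S ∈ comps, S.Nonempty
  comps_cover : ∀ a : α, ∃ S ∈ comps, a ∈ S
  comps_incomp : ∀ S ∈ comps, ∀ T ∈ comps, S ≠ T → ¬ S ⊆ T

section Defs

variable {α : Type} [Fintype α]

/-- Natural projection `P_{Σ'}`: erase from a string all symbols not in `S`. -/
noncomputable def projA (S : Set α) (s : List α) : List α :=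
  s.filter fun a => @decide (a ∈ S) (Classical.propDecidable _)

/-- `L` is decomposable with respect to `Δ`:
`L = ∥_i P_{Σ_i}(L) = ⋂_i P_{Σ_i}⁻¹(P_{Σ_i}(L))`. -/
def Decomposable (L : Set (List α)) (Δ : Distr α) : Prop :=
  L = ⋂ S ∈ Δ.comps, projA S ⁻¹' (projA S '' L)

/-- The partial order `≤_Σ` on distributions: every component of `Δ` is
contained in some component of `Δ'`. -/
def DistLE (Δ Δ' : Distr α) : Prop :=
  ∀ S ∈ Δ.comps, ∃ T ∈ Δ'.comps, S ⊆ T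

/-- `P` is a *reduction* of `Δ`. -/
def IsReduction (P : Set (Distr α)) (Δ : Distr α) : Prop :=
  2 ≤ P.ncard ∧
  (∀ Δ' ∈ P, Δ'.comps.ncard < Δ.comps.ncard) ∧
  (∀ L : Set (List α), Decomposable L Δ ↔ ∀ Δ' ∈ P, Decomposable L Δ')

/-- The maximal members (under set inclusion) of a family of sets. -/
def MaximalMem {β : Type} (F : Set (Set β)) : Set (Set β) :=
  {S | S ∈ F ∧ ∀ T ∈ F, S ⊆ T → S = T}

/-- The dependence relation `D_Δ`. -/
def DepRel (Δ : Distr α) : Set (α × α) :=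
  {p | ∃ S ∈ Δ.comps, p.1 ∈ S ∧ p.2 ∈ S}

/-- The independence relation `I_Δ = Σ × Σ − D_Δ`. -/
def IndepRel (Δ : Distr α) : Set (α × α) :=
  {p | ¬ ∃ S ∈ Δ.comps, p.1 ∈ S ∧ p.2 ∈ S}

/-- `Σ' ⊑ Δ`: `Σ'` is contained in some component of `Δ`. -/
def SqSub (S : Set α) (Δ : Distr α) : Prop :=
  ∃ T ∈ Δ.comps, S ⊆ T

/-- `Δ` is the greatest lower bound of the family `D` with respect to `≤_Σ`. -/
def IsGLBFam {l : ℕ} (D : Fin l → Distr α) (Δ : Distr α) : Prop :=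
  (∀ i, DistLE Δ (D i)) ∧
  ∀ Δ''' : Distr α, (∀ i, DistLE Δ''' (D i)) → DistLE Δ''' Δ

/-- `Δ'` is *merged* from `Δ`: `Δ' ≠ (Σ)` and `Δ'` is obtained from a
partition of the components of `Δ` having at least one block of size ≥ 2 by
taking the unions over the blocks and keeping only the maximal resulting
sub-alphabets. -/
def MergedFrom (Δ' Δ : Distr α) : Prop :=
  Δ'.comps ≠ {Set.univ} ∧
  ∃ part : Set (Set (Set α)),
    (∀ B ∈ part, B.Nonempty) ∧
    (∀ B ∈ part, B ⊆ Δ.comps) ∧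
    (∀ B ∈ part, ∀ C ∈ part, B ≠ C → Disjoint B C) ∧
    (∀ S ∈ Δ.comps, ∃ B ∈ part, S ∈ B) ∧
    (∃ B ∈ part, ∃ S ∈ B, ∃ T ∈ B, S ≠ T) ∧
    Δ'.comps = MaximalMem {U : Set α | ∃ B ∈ part, U = ⋃₀ B}

/-- Membership in the search space `S_Δ`: a set of distributions merged from
`Δ` that are pairwise `≤_Σ`-incomparable. -/
def MemS (Δ : Distr α) (P : Set (Distr α)) : Prop :=
  (∀ Δ' ∈ P, MergedFrom Δ' Δ) ∧
  ∀ Δ₁ ∈ P, ∀ Δ₂ ∈ P, Δ₁ ≠ Δ₂ → ¬ DistLE Δ₁ Δ₂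

/-- The ordering `≤_Δ` on sets of distributions: every member of `Q` has a
member of `P` below it with respect to `≤_Σ`. -/
def SetLE (P Q : Set (Distr α)) : Prop :=
  ∀ Δ' ∈ Q, ∃ Δ'' ∈ P, DistLE Δ'' Δ'

/-- `[F]`: the `≤_Σ`-minimal members of a set of distributions. -/
def MinimalD (F : Set (Distr α)) : Set (Distr α) :=
  {Δ' | Δ' ∈ F ∧ ∀ Δ'' ∈ F, DistLE Δ'' Δ' → DistLE Δ' Δ''}

/-- `Δ'` is obtained from `Δ` by merging exactly two components `S ≠ T`
(and keeping only the maximal sub-alphabets); the members of `⊥(Δ)`. -/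
def MinMergedFrom (Δ' Δ : Distr α) : Prop :=
  ∃ S ∈ Δ.comps, ∃ T ∈ Δ.comps, S ≠ T ∧
    Δ'.comps = MaximalMem ((Δ.comps \ {S, T}) ∪ {S ∪ T})

/-- The set `A(Δ)` of shared symbols of a distribution. -/
def SharedSyms (Δ : Distr α) : Set α :=
  {a | ∃ S ∈ Δ.comps, ∃ T ∈ Δ.comps, S ≠ T ∧ a ∈ S ∧ a ∈ T}

/-- The substitution of `Δ'` into the component `C` of `Δ''` yields `Δs`:
`Δs` is obtained from the components of `Δ''` other than `C` together with the
intersections `C ∩ S` for components `S` of `Δ'`, keeping only the maximal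
non-empty members. -/
def SubstResult (Δ' Δ'' : Distr α) (C : Set α) (Δs : Distr α) : Prop :=
  Δs.comps =
    MaximalMem {T : Set α |
      T.Nonempty ∧ (T ∈ Δ''.comps \ {C} ∨ ∃ S ∈ Δ'.comps, T = C ∩ S)}

/-- One swap of two adjacent symbols forming a pair in `I`. -/
def SwapStep (I : Set (α × α)) (s t : List α) : Prop :=
  ∃ (u v : List α) (a b : α),
    (a, b) ∈ I ∧ s = u ++ a :: b :: v ∧ t = u ++ b :: a :: v

/-- Trace equivalence with respect to `I`: a finite sequence of swaps of
adjacent independent symbols. -/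
def TraceEquiv (I : Set (α × α)) : List α → List α → Prop :=
  Relation.ReflTransGen (SwapStep I)

/-- `L` is trace-closed with respect to `I`. -/
def TraceClosed (I : Set (α × α)) (L : Set (List α)) : Prop :=
  L = {t | ∃ s ∈ L, TraceEquiv I s t}

/-- The map `N` determined by the enumeration `c` of the components of a
distribution: `N(a) = {i : a ∉ Σ_i}`. -/
def Nmap {n : ℕ} (c : Fin n → Set α) (a : α) : Set (Fin n) :=
  {i | a ∉ c i}

/-- A simple path from `x` to `y` in the graph `(Σ, D)`: a list of pairwise
distinct symbols, starting at `x`, ending at `y`, with consecutive symbols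
related by `D`. -/
def IsSimplePath (D : Set (α × α)) (p : List α) (x y : α) : Prop :=
  p.Nodup ∧ p.head? = some x ∧ p.getLast? = some y ∧
    p.Chain' (fun a b => (a, b) ∈ D)

/-- `Cr_D(S, y)` (with `N` given by the enumeration `c`): the set of indices
`i` such that some simple path `p` from some `x ∈ S` to `y` in `(Σ, D)`
satisfies `i ∈ ⋂_{a ∈ p.dropLast} N(a)`. -/
def CrSet {n : ℕ} (c : Fin n → Set α) (D : Set (α × α)) (S : Set α) (y : α) :
    Set (Fin n) :=
  {i | ∃ x ∈ S, ∃ p : List α,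
    IsSimplePath D p x y ∧ ∀ a ∈ p.dropLast, i ∈ Nmap c a}

/-- The smallest set of distributions containing `Q` and closed under
substitution. -/
inductive SubstClosure (Q : Set (Distr α)) : Distr α → Prop
  | base (Δ' : Distr α) (h : Δ' ∈ Q) : SubstClosure Q Δ'
  | step (Δ' Δ'' Δs : Distr α) (C : Set α)
      (h1 : SubstClosure Q Δ') (h2 : SubstClosure Q Δ'')
      (hC : C ∈ Δ''.comps) (hA : SharedSyms Δ' ⊆ C)
      (hs : SubstResult Δ' Δ'' C Δs) : SubstClosure Q Δs

end Defs

section Count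

variable {α : Type} [Fintype α] [DecidableEq α]

/-- `L(Σ_j)` (with `j` 0-indexed, so the paper's exponent `j+1` is `j+2`
here): all strings containing exactly one occurrence of each `σ_i ∈ Σ_j` and
exactly `j+2` occurrences of each `σ_i ∉ Σ_j`. -/
def Lword {m : ℕ} (σ : Fin m → α) (Sj : Set α) (j : ℕ) : Set (List α) :=
  {s | ∀ i : Fin m,
    (σ i ∈ Sj → s.count (σ i) = 1) ∧ (σ i ∉ Sj → s.count (σ i) = j + 2)}

/-- The candidate counter example `L_cand = ⋃_j L(Σ_j)`, relative to an
enumeration `c` of the components and an enumeration `σ` of the alphabet. -/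
def Lcand {n m : ℕ} (c : Fin n → Set α) (σ : Fin m → α) : Set (List α) :=
  ⋃ j : Fin n, Lword σ (c j) (j : ℕ)

end Count

lemma exists_maximalMem {β : Type} [Fintype β] (F : Set (Set β)) {S : Set β}
    (hS : S ∈ F) : ∃ M ∈ MaximalMem F, S ⊆ M := by
  obtain ⟨M, hSM, hmax⟩ := (Set.toFinite F).exists_le_maximal hS
  exact ⟨M, ⟨hmax.1, fun T hT hMT => le_antisymm hMT (hmax.2 hT hMT)⟩, hSM⟩

/-- `(Δ(Σ), ≤_Σ)` is a lattice: the maximal members of the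
pairwise intersections form the greatest lower bound, and the maximal members
of the union of the components form the least upper bound. -/
theorem statement_0 {α : Type} [Fintype α] (Δ Δ' Δm Δj : Distr α)
    (hm : Δm.comps =
      MaximalMem {U : Set α | ∃ S ∈ Δ.comps, ∃ T ∈ Δ'.comps, U = S ∩ T})
    (hj : Δj.comps = MaximalMem (Δ.comps ∪ Δ'.comps)) :
    (DistLE Δm Δ ∧ DistLE Δm Δ' ∧
      ∀ Δ''' : Distr α, DistLE Δ''' Δ → DistLE Δ''' Δ' → DistLE Δ''' Δm) ∧
    (DistLE Δ Δj ∧ DistLE Δ' Δj ∧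
      ∀ Δ''' : Distr α, DistLE Δ Δ''' → DistLE Δ' Δ''' → DistLE Δj Δ''') := by
  constructor
  · refine ⟨?_, ?_, ?_⟩
    · intro U hU
      rw [hm] at hU
      obtain ⟨⟨S, hS, T, hT, rfl⟩, _⟩ := hU
      exact ⟨S, hS, Set.inter_subset_left⟩
    · intro U hU
      rw [hm] at hU
      obtain ⟨⟨S, hS, T, hT, rfl⟩, _⟩ := hU
      exact ⟨T, hT, Set.inter_subset_right⟩
    · intro Δ''' h1 h2 U hU
      obtain ⟨S, hS, hUS⟩ := h1 U hU
      obtain ⟨T, hT, hUT⟩ := h2 U hU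
      obtain ⟨M, hM, hSTM⟩ := exists_maximalMem
        {U : Set α | ∃ S ∈ Δ.comps, ∃ T ∈ Δ'.comps, U = S ∩ T}
        ⟨S, hS, T, hT, rfl⟩
      exact ⟨M, by rw [hm]; exact hM, (Set.subset_inter hUS hUT).trans hSTM⟩
  · refine ⟨?_, ?_, ?_⟩
    · intro S hS
      obtain ⟨M, hM, hSM⟩ := exists_maximalMem (Δ.comps ∪ Δ'.comps) (Or.inl hS)
      exact ⟨M, by rw [hj]; exact hM, hSM⟩
    · intro S hS
      obtain ⟨M, hM, hSM⟩ := exists_maximalMem (Δ.comps ∪ Δ'.comps) (Or.inr hS)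
      exact ⟨M, by rw [hj]; exact hM, hSM⟩
    · intro Δ''' h1 h2 U hU
      rw [hj] at hU
      rcases hU.1 with h | h
      · exact h1 U h
      · exact h2 U h
end

section
/- If {Δ_1, …, Δ_l} is a reduction of a distribution Δ of Σ, then Δ is the greatest lower bound of {Δ_1, …, Δ_l} with respect to ≤_Σ. -/
/-!
A sub-alphabet `S` lies inside a component of `Δ` exactly when every language over `S` is
decomposable with respect to `Δ`: if no component contains `S`, the words over `S` with a
repeated letter form a non-decomposable language. Since a reduction has the same decomposable
languages as its members jointly, `S ⊑ Δ` holds iff `S ⊑ Δᵢ` for every member `Δᵢ`; applied to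
the components of `Δ` and of a common lower bound, this is the greatest-lower-bound property.
-/

section Projection

variable {α : Type}

theorem mem_projA {T : Set α} {s : List α} {a : α} : a ∈ projA T s ↔ a ∈ s ∧ a ∈ T := by
  simp [projA]

theorem projA_eq_self {T : Set α} {s : List α} (h : ∀ a ∈ s, a ∈ T) : projA T s = s :=
  List.filter_eq_self.2 fun a ha => by simpa using h a ha

theorem projA_append (T : Set α) (s t : List α) :
    projA T (s ++ t) = projA T s ++ projA T t :=
  List.filter_append ..

theorem projA_projA_compl (T : Set α) (s : List α) : projA T (projA Tᶜ s) = [] :=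
  List.eq_nil_iff_forall_not_mem.2 fun _ ha =>
    (mem_projA.1 (mem_projA.1 ha).1).2 (mem_projA.1 ha).2

end Projection

namespace Distr

variable {α : Type} [Fintype α]

theorem decomposable_iff_subset {L : Set (List α)} {Δ : Distr α} :
    Decomposable L Δ ↔ ⋂ T ∈ Δ.comps, projA T ⁻¹' (projA T '' L) ⊆ L :=
  ⟨fun h => h.symm.subset, fun h =>
    h.antisymm' fun w hw => Set.mem_iInter₂.2 fun _ _ => ⟨w, hw, rfl⟩⟩

theorem decomposable_of_forall_mem_subset {L : Set (List α)} {Δ : Distr α} {T₀ : Set α}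
    (hT₀ : T₀ ∈ Δ.comps) (hL : ∀ s ∈ L, ∀ a ∈ s, a ∈ T₀) : Decomposable L Δ := by
  refine decomposable_iff_subset.2 fun w hw => ?_
  have hproj : ∀ T ∈ Δ.comps, ∃ u ∈ L, projA T u = projA T w := fun T hT =>
    Set.mem_iInter₂.1 hw T hT
  have hw₀ : ∀ a ∈ w, a ∈ T₀ := by
    intro a ha
    obtain ⟨T, hT, haT⟩ := Δ.comps_cover a
    obtain ⟨u, hu, huw⟩ := hproj T hT
    have hau : a ∈ projA T u := huw ▸ mem_projA.2 ⟨ha, haT⟩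
    exact hL u hu a (mem_projA.1 hau).1
  obtain ⟨u, hu, huw⟩ := hproj T₀ hT₀
  rw [projA_eq_self (hL u hu), projA_eq_self hw₀] at huw
  exact huw ▸ hu

def wordsWithRepeatedLetter (S : Set α) : Set (List α) :=
  {s | (∀ a ∈ s, a ∈ S) ∧ ¬ s.Nodup}

/-- A duplicate-free enumeration `w` of `S` is not in the language, but for each component `T`
the word `w ++ projA Tᶜ w` is, and it has the same projection onto `T` as `w`. -/
theorem not_decomposable_wordsWithRepeatedLetter {S : Set α} {Δ : Distr α}
    (hS : ¬ SqSub S Δ) : ¬ Decomposable (wordsWithRepeatedLetter S) Δ := by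
  classical
  set w := S.toFinset.toList
  have hw : ∀ a, a ∈ w ↔ a ∈ S := by simp [w]
  intro hdec
  have hwL : w ∉ wordsWithRepeatedLetter S := fun h => h.2 (Finset.nodup_toList _)
  rw [hdec] at hwL
  refine hwL (Set.mem_iInter₂.2 fun T hT => ?_)
  obtain ⟨a, haS, haT⟩ := Set.not_subset.1 fun hST => hS ⟨T, hT, hST⟩
  refine ⟨w ++ projA Tᶜ w, ⟨fun b hb => ?_, fun hnd => ?_⟩, ?_⟩
  · rcases List.mem_append.1 hb with hb | hb
    exacts [(hw b).1 hb, (hw b).1 (mem_projA.1 hb).1]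
  · exact List.disjoint_of_nodup_append hnd ((hw a).2 haS)
      (mem_projA.2 ⟨(hw a).2 haS, haT⟩)
  · simp only [projA_append, projA_projA_compl, List.append_nil]

theorem sqSub_iff_forall_decomposable (S : Set α) (Δ : Distr α) :
    SqSub S Δ ↔ ∀ L : Set (List α), (∀ s ∈ L, ∀ a ∈ s, a ∈ S) → Decomposable L Δ := by
  refine ⟨fun ⟨T, hT, hST⟩ L hL => ?_, fun h => ?_⟩
  · exact decomposable_of_forall_mem_subset hT fun s hs a ha => hST (hL s hs a ha)
  · by_contra hS
    exact not_decomposable_wordsWithRepeatedLetter hS (h _ fun _ hs => hs.1)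

theorem sqSub_iff_forall_sqSub_of_decomposable_iff {Δ : Distr α} {P : Set (Distr α)}
    (hP : ∀ L : Set (List α), Decomposable L Δ ↔ ∀ Δ' ∈ P, Decomposable L Δ')
    (S : Set α) : SqSub S Δ ↔ ∀ Δ' ∈ P, SqSub S Δ' := by
  simp only [sqSub_iff_forall_decomposable, hP]
  exact ⟨fun h Δ' hΔ' L hL => h L hL Δ' hΔ', fun h L hL Δ' hΔ' => h Δ' hΔ' L hL⟩

end Distr

/-- If `P` is a reduction of `Δ`, then `Δ` is the greatest
lower bound of `P` with respect to `≤_Σ`. -/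
theorem statement_1 {α : Type} [Fintype α] (Δ : Distr α) (P : Set (Distr α))
    (h : IsReduction P Δ) :
    (∀ Δi ∈ P, DistLE Δ Δi) ∧
    ∀ Δ''' : Distr α, (∀ Δi ∈ P, DistLE Δ''' Δi) → DistLE Δ''' Δ := by
  obtain ⟨-, -, hdecomp⟩ := h
  have hsqSub := Distr.sqSub_iff_forall_sqSub_of_decomposable_iff hdecomp
  exact ⟨fun Δi hΔi S hS => (hsqSub S).1 ⟨S, hS, subset_rfl⟩ Δi hΔi,
    fun Δ''' hlow S hS => (hsqSub S).2 fun Δi hΔi => hlow Δi hΔi S hS⟩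
end

section
/- Let Δ and Δ_1, …, Δ_l be distributions of Σ. Then Δ is the greatest lower bound of {Δ_1, …, Δ_l} with respect to ≤_Σ if and only if for every subset Σ' ⊆ Σ of cardinality at least 2, one has: (Σ' ⊑ Δ_i for every i ∈ [1, l]) ⟺ Σ' ⊑ Δ. -/
/-! Singletons are `⊑` every distribution, so `≤_Σ` is decided by the components with at least
two symbols. Conversely, a non-empty `Σ'` is `⊑ Δ'` exactly when the distribution made of `Σ'`
and the singletons outside it lies below `Δ'`; applied to a greatest lower bound this gives the
equivalence for every `Σ'`. -/

section GLB

variable {α : Type} [Fintype α]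

theorem sqSub_singleton (Δ : Distr α) (a : α) : SqSub {a} Δ := by
  obtain ⟨T, hT, haT⟩ := Δ.comps_cover a
  exact ⟨T, hT, Set.singleton_subset_iff.mpr haT⟩

theorem SqSub.of_distLE {S : Set α} {Δ Δ' : Distr α} (hS : SqSub S Δ) (h : DistLE Δ Δ') :
    SqSub S Δ' := by
  obtain ⟨T, hT, hST⟩ := hS
  obtain ⟨U, hU, hTU⟩ := h T hT
  exact ⟨U, hU, hST.trans hTU⟩

theorem distLE_of_two_le_ncard {Δ Δ' : Distr α}
    (h : ∀ S ∈ Δ.comps, 2 ≤ S.ncard → SqSub S Δ') : DistLE Δ Δ' := by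
  intro S hS
  rcases (Δ.comps_nonempty S hS).exists_eq_singleton_or_nontrivial with ⟨a, rfl⟩ | hnt
  · exact sqSub_singleton Δ' a
  · exact h S hS ((Set.one_lt_ncard_iff_nontrivial).mpr hnt)

def Distr.ofBlock (S : Set α) (hS : S.Nonempty) : Distr α where
  comps := insert S ((fun x => ({x} : Set α)) '' Sᶜ)
  comps_nonempty := by
    rintro T (rfl | ⟨x, -, rfl⟩)
    exacts [hS, Set.singleton_nonempty x]
  comps_cover a := by
    by_cases ha : a ∈ S
    · exact ⟨S, Set.mem_insert S _, ha⟩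
    · exact ⟨{a}, Set.mem_insert_of_mem S ⟨a, ha, rfl⟩, rfl⟩
  comps_incomp := by
    rintro T (rfl | ⟨x, hx, rfl⟩) U (rfl | ⟨y, hy, rfl⟩) hne hsub
    · exact hne rfl
    · obtain ⟨a, ha⟩ := hS
      exact hy (Set.mem_singleton_iff.mp (hsub ha) ▸ ha)
    · exact hx (hsub rfl)
    · exact hne (by rw [Set.mem_singleton_iff.mp (hsub rfl)])

theorem Distr.distLE_ofBlock_iff {S : Set α} (hS : S.Nonempty) (Δ : Distr α) :
    DistLE (Distr.ofBlock S hS) Δ ↔ SqSub S Δ := by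
  refine ⟨fun h => h S (Set.mem_insert S _), fun h => ?_⟩
  rintro T (rfl | ⟨x, -, rfl⟩)
  exacts [h, sqSub_singleton Δ x]

theorem IsGLBFam.sqSub_iff {l : ℕ} {D : Fin l → Distr α} {Δ : Distr α} (h : IsGLBFam D Δ)
    {S : Set α} (hS : S.Nonempty) : (∀ i, SqSub S (D i)) ↔ SqSub S Δ := by
  refine ⟨fun hD => ?_, fun hΔ i => hΔ.of_distLE (h.1 i)⟩
  simp only [← Distr.distLE_ofBlock_iff hS] at hD ⊢
  exact h.2 _ hD

theorem isGLBFam_of_sqSub_iff {l : ℕ} {D : Fin l → Distr α} {Δ : Distr α}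
    (H : ∀ S : Set α, 2 ≤ S.ncard → ((∀ i, SqSub S (D i)) ↔ SqSub S Δ)) : IsGLBFam D Δ :=
  ⟨fun i => distLE_of_two_le_ncard fun S hS h2 => (H S h2).mpr ⟨S, hS, subset_rfl⟩ i,
    fun _ hlow => distLE_of_two_le_ncard fun S hS h2 => (H S h2).mp fun i => hlow i S hS⟩

end GLB

/-- `Δ` is the greatest lower bound of `Δ_1, …, Δ_l` iff for
every `Σ' ⊆ Σ` of cardinality at least 2:
`(∀ i, Σ' ⊑ Δ_i) ↔ Σ' ⊑ Δ`. -/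
theorem statement_2 {α : Type} [Fintype α] (Δ : Distr α) (l : ℕ)
    (D : Fin l → Distr α) :
    IsGLBFam D Δ ↔
      ∀ S : Set α, 2 ≤ S.ncard → ((∀ i, SqSub S (D i)) ↔ SqSub S Δ) :=
  ⟨fun h S hS => h.sqSub_iff (Set.nonempty_of_ncard_ne_zero (by omega)),
    isGLBFam_of_sqSub_iff⟩
end

section
/- Let Δ be a distribution of Σ with M(Δ) ≠ ∅. Then (S_Δ, ≤_Δ) is a finite lattice. Concretely, for P, P' ∈ S_Δ: (i) [P ∪ P'] is the greatest lower bound of P and P' with respect to ≤_Δ; and (ii) the set obtained from {Δ'' ∈ M(Δ) : ∃ Δ_i ∈ P, ∃ Δ'_j ∈ P', Δ_i ∨ Δ'_j ≤_Σ Δ''} by keeping only its ≤_Σ-minimal members is the least upper bound of P and P' with respect to ≤_Δ. -/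
/-! `[F]` lies `≤_Δ`-below every subfamily of `F`, since by finiteness every member of `F` sits
above a minimal one. Hence `[P ∪ P']` is the meet: lying below `P ∪ P'` means lying below both.
For the join, every member `q` of a common upper bound `Q` of `P` and `P'` is merged from `Δ` and
lies above some `Δi ∈ P` and `Δj ∈ P'`, hence above `Δi ∨ Δj`; so `Q` is contained in the
candidate family, whose minimal members therefore lie below `Q`. -/

section Lattice

variable {α : Type} [Fintype α]

lemma Distr.ext_comps {Δ Δ' : Distr α} (h : Δ.comps = Δ'.comps) : Δ = Δ' := by
  cases Δ; cases Δ'; simp_all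

instance : Finite (Distr α) :=
  Finite.of_injective Distr.comps fun _ _ => Distr.ext_comps

lemma distLE_refl (Δ : Distr α) : DistLE Δ Δ := fun S hS => ⟨S, hS, subset_rfl⟩

lemma distLE_trans {Δ₁ Δ₂ Δ₃ : Distr α} (h₁₂ : DistLE Δ₁ Δ₂) (h₂₃ : DistLE Δ₂ Δ₃) :
    DistLE Δ₁ Δ₃ := by
  intro S hS
  obtain ⟨T, hT, hST⟩ := h₁₂ S hS
  obtain ⟨U, hU, hTU⟩ := h₂₃ T hT
  exact ⟨U, hU, hST.trans hTU⟩

lemma comps_subset_of_distLE_of_distLE {Δ₁ Δ₂ : Distr α} (h₁₂ : DistLE Δ₁ Δ₂)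
    (h₂₁ : DistLE Δ₂ Δ₁) : Δ₁.comps ⊆ Δ₂.comps := by
  intro S hS
  obtain ⟨T, hT, hST⟩ := h₁₂ S hS
  obtain ⟨U, hU, hTU⟩ := h₂₁ T hT
  have hSU : S = U := by_contra fun hne => Δ₁.comps_incomp S hS U hU hne (hST.trans hTU)
  rwa [subset_antisymm hST (hSU ▸ hTU)]

lemma distLE_antisymm {Δ₁ Δ₂ : Distr α} (h₁₂ : DistLE Δ₁ Δ₂) (h₂₁ : DistLE Δ₂ Δ₁) :
    Δ₁ = Δ₂ :=
  Distr.ext_comps <| subset_antisymm (comps_subset_of_distLE_of_distLE h₁₂ h₂₁)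
    (comps_subset_of_distLE_of_distLE h₂₁ h₁₂)

instance : PartialOrder (Distr α) where
  le := DistLE
  le_refl := distLE_refl
  le_trans _ _ _ := distLE_trans
  le_antisymm _ _ := distLE_antisymm

lemma minimalD_subset (F : Set (Distr α)) : MinimalD F ⊆ F := fun _ h => h.1

lemma exists_mem_minimalD_distLE {F : Set (Distr α)} {Δ : Distr α} (hΔ : Δ ∈ F) :
    ∃ Δ₀ ∈ MinimalD F, DistLE Δ₀ Δ := by
  obtain ⟨Δ₀, hΔ₀, hmin⟩ := Set.Finite.exists_minimalFor id {Δ' ∈ F | DistLE Δ' Δ}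
    (Set.toFinite _) ⟨Δ, hΔ, distLE_refl Δ⟩
  refine ⟨Δ₀, ⟨hΔ₀.1, fun Δ' hΔ' hle => ?_⟩, hΔ₀.2⟩
  rw [distLE_antisymm hle (hmin ⟨hΔ', distLE_trans hle hΔ₀.2⟩ hle)]
  exact distLE_refl Δ₀

lemma memS_minimalD {Δ : Distr α} {F : Set (Distr α)} (hF : ∀ Δ' ∈ F, MergedFrom Δ' Δ) :
    MemS Δ (MinimalD F) :=
  ⟨fun Δ' h => hF Δ' h.1, fun _ h₁ _ h₂ hne h₁₂ => hne (distLE_antisymm h₁₂ (h₂.2 _ h₁.1 h₁₂))⟩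

lemma SetLE.mono_right {P Q Q' : Set (Distr α)} (h : SetLE P Q) (hQ' : Q' ⊆ Q) :
    SetLE P Q' := fun Δ' hΔ' => h Δ' (hQ' hΔ')

lemma SetLE.union {Q P P' : Set (Distr α)} (h : SetLE Q P) (h' : SetLE Q P') :
    SetLE Q (P ∪ P') := fun Δ' hΔ' => hΔ'.elim (h Δ') (h' Δ')

lemma minimalD_setLE_of_subset {F P : Set (Distr α)} (hP : P ⊆ F) : SetLE (MinimalD F) P :=
  fun _ hΔ' => exists_mem_minimalD_distLE (hP hΔ')

lemma exists_mem_maximalMem_superset {β : Type} [Finite β] {F : Set (Set β)} {S : Set β}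
    (hS : S ∈ F) : ∃ T ∈ MaximalMem F, S ⊆ T := by
  obtain ⟨T, hT, hmax⟩ := Set.Finite.exists_maximalFor id {U ∈ F | S ⊆ U}
    (Set.toFinite _) ⟨S, hS, subset_rfl⟩
  exact ⟨T, ⟨hT.1, fun U hU hTU => subset_antisymm hTU (hmax ⟨hU, hT.2.trans hTU⟩ hTU)⟩, hT.2⟩

lemma distLE_of_comps_eq_maximalMem {Δ Δv : Distr α} {F : Set (Set α)} (hΔ : Δ.comps ⊆ F)
    (hΔv : Δv.comps = MaximalMem F) : DistLE Δ Δv :=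
  fun _ hS => hΔv ▸ exists_mem_maximalMem_superset (hΔ hS)

def Distr.sup (Δ₁ Δ₂ : Distr α) : Distr α where
  comps := MaximalMem (Δ₁.comps ∪ Δ₂.comps)
  comps_nonempty S hS := hS.1.elim (Δ₁.comps_nonempty S) (Δ₂.comps_nonempty S)
  comps_cover a := by
    obtain ⟨S, hS, haS⟩ := Δ₁.comps_cover a
    obtain ⟨T, hT, hST⟩ := exists_mem_maximalMem_superset (Set.mem_union_left Δ₂.comps hS)
    exact ⟨T, hT, hST haS⟩
  comps_incomp _ hS T hT hne hsub := hne (hS.2 T hT.1 hsub)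

lemma Distr.sup_distLE {Δ₁ Δ₂ Δ : Distr α} (h₁ : DistLE Δ₁ Δ) (h₂ : DistLE Δ₂ Δ) :
    DistLE (Δ₁.sup Δ₂) Δ :=
  fun S hS => hS.1.elim (h₁ S) (h₂ S)

end Lattice

theorem statement_4_general {α : Type} [Fintype α] (Δ : Distr α)
    (P P' Pm PJ : Set (Distr α)) (hP : MemS Δ P) (hP' : MemS Δ P')
    (hPm : Pm = MinimalD (P ∪ P'))
    (hPJ : PJ = MinimalD {Δ'' : Distr α | MergedFrom Δ'' Δ ∧
      ∃ Δi ∈ P, ∃ Δj ∈ P', ∃ Δv : Distr α,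
        Δv.comps = MaximalMem (Δi.comps ∪ Δj.comps) ∧ DistLE Δv Δ''}) :
    (MemS Δ Pm ∧ SetLE Pm P ∧ SetLE Pm P' ∧
      ∀ Q : Set (Distr α), MemS Δ Q → SetLE Q P → SetLE Q P' → SetLE Q Pm) ∧
    (MemS Δ PJ ∧ SetLE P PJ ∧ SetLE P' PJ ∧
      ∀ Q : Set (Distr α), MemS Δ Q → SetLE P Q → SetLE P' Q → SetLE PJ Q) := by
  subst hPm hPJ
  set F := {Δ'' : Distr α | MergedFrom Δ'' Δ ∧
      ∃ Δi ∈ P, ∃ Δj ∈ P', ∃ Δv : Distr α,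
        Δv.comps = MaximalMem (Δi.comps ∪ Δj.comps) ∧ DistLE Δv Δ''}
  have hPF : SetLE P F ∧ SetLE P' F := by
    refine ⟨fun Δ'' h => ?_, fun Δ'' h => ?_⟩ <;> obtain ⟨-, Δi, hΔi, Δj, hΔj, Δv, hΔv, hle⟩ := h
    · exact ⟨Δi, hΔi, distLE_trans (distLE_of_comps_eq_maximalMem Set.subset_union_left hΔv) hle⟩
    · exact ⟨Δj, hΔj, distLE_trans (distLE_of_comps_eq_maximalMem Set.subset_union_right hΔv) hle⟩
  have hupper_subset : ∀ Q, MemS Δ Q → SetLE P Q → SetLE P' Q → Q ⊆ F := by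
    intro Q hQ hPQ hP'Q q hq
    obtain ⟨Δi, hΔi, hiq⟩ := hPQ q hq
    obtain ⟨Δj, hΔj, hjq⟩ := hP'Q q hq
    exact ⟨hQ.1 q hq, Δi, hΔi, Δj, hΔj, Δi.sup Δj, rfl, Distr.sup_distLE hiq hjq⟩
  refine ⟨⟨memS_minimalD fun Δ' h => h.elim (hP.1 Δ') (hP'.1 Δ'),
      minimalD_setLE_of_subset Set.subset_union_left, minimalD_setLE_of_subset Set.subset_union_right,
      fun Q _ hQP hQP' => (hQP.union hQP').mono_right (minimalD_subset _)⟩,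
    ⟨memS_minimalD fun _ h => h.1, hPF.1.mono_right (minimalD_subset F),
      hPF.2.mono_right (minimalD_subset F),
      fun Q hQ hPQ hP'Q => minimalD_setLE_of_subset (hupper_subset Q hQ hPQ hP'Q)⟩⟩

/-- For a distribution `Δ` with `M(Δ) ≠ ∅`, `(S_Δ, ≤_Δ)` is
a (finite) lattice: `[P ∪ P']` is the greatest lower bound of `P, P'`, and the
`≤_Σ`-minimal members of `{Δ'' ∈ M(Δ) | ∃ Δi ∈ P, Δj ∈ P', Δi ∨ Δj ≤_Σ Δ''}`
form the least upper bound of `P, P'`. -/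
theorem statement_4 {α : Type} [Fintype α] (Δ : Distr α)
    (hM : ∃ Δ0 : Distr α, MergedFrom Δ0 Δ)
    (P P' Pm PJ : Set (Distr α)) (hP : MemS Δ P) (hP' : MemS Δ P')
    (hPm : Pm = MinimalD (P ∪ P'))
    (hPJ : PJ = MinimalD {Δ'' : Distr α | MergedFrom Δ'' Δ ∧
      ∃ Δi ∈ P, ∃ Δj ∈ P', ∃ Δv : Distr α,
        Δv.comps = MaximalMem (Δi.comps ∪ Δj.comps) ∧ DistLE Δv Δ''}) :
    (MemS Δ Pm ∧ SetLE Pm P ∧ SetLE Pm P' ∧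
      ∀ Q : Set (Distr α), MemS Δ Q → SetLE Q P → SetLE Q P' → SetLE Q Pm) ∧
    (MemS Δ PJ ∧ SetLE P PJ ∧ SetLE P' PJ ∧
      ∀ Q : Set (Distr α), MemS Δ Q → SetLE P Q → SetLE P' Q → SetLE PJ Q) :=
  statement_4_general Δ P P' Pm PJ hP hP' hPm hPJ
end

section
/- Let Δ = (Σ_1, …, Σ_n) be a distribution of Σ and let Δ' = (Σ'_1, …, Σ'_k) ∈ M(Δ). If there exists i ∈ [1, k] such that Σ'_i is not a component of Δ and Cr_{Δ'}(Σ'_i, σ') = [1, n] for every σ' ∈ Σ − Σ'_i (where Cr_{Δ'} is computed with N determined by Δ and with simple paths in the graph (Σ, D_{Δ'})), then L_cand is decomposable with respect to Δ'. -/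
/-!
If `s` lies in the synchronous product, each component `T` of `Δ'` sees the projection of
a word of some `L(Σ_j)`, so the letter counts of `s` on `T` follow the `j`-th profile
(`1` on `Σ_j`, `j + 2` off it). A count `j + 2` pins down `j`, hence along an edge of
`D_{Δ'}` leaving a letter outside `Σ_j` the `j`-th profile propagates. Fix the index `j`
of the component `S`: for a letter `y ∉ S`, `j ∈ Cr_{Δ'}(S, y)` yields a path from `S`
to `y` whose letters before `y` avoid `Σ_j`, so `y` also follows profile `j`. Thus
`s ∈ L(Σ_j)`.
-/

theorem subset_iInter_preimage_projA_image {α : Type} [Fintype α]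
    (L : Set (List α)) (Δ : Distr α) :
    L ⊆ ⋂ S ∈ Δ.comps, projA S ⁻¹' (projA S '' L) :=
  fun s hs => Set.mem_iInter₂.2 fun _ _ => Set.mem_image_of_mem _ hs

theorem decomposable_iff_iInter_subset {α : Type} [Fintype α]
    {L : Set (List α)} {Δ : Distr α} :
    Decomposable L Δ ↔ ⋂ S ∈ Δ.comps, projA S ⁻¹' (projA S '' L) ⊆ L :=
  ⟨fun h => h.symm.subset, fun h => (subset_iInter_preimage_projA_image L Δ).antisymm h⟩

theorem count_projA_of_mem {α : Type} [Fintype α] [DecidableEq α] {S : Set α} {a : α}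
    (ha : a ∈ S) (s : List α) : (projA S s).count a = s.count a :=
  List.count_filter (by simpa using ha)

section Profile

variable {α : Type} {n : ℕ} (c : Fin n → Set α)

open Classical in
/-- The letter counts shared by all words of `L(Σ_j)` when `c j = Σ_j`. -/
noncomputable def profile (j : Fin n) (a : α) : ℕ :=
  if a ∈ c j then 1 else j + 2

def ProfiledOnEdges (D : Set (α × α)) (f : α → ℕ) : Prop :=
  ∀ p ∈ D, ∃ i, f p.1 = profile c i p.1 ∧ f p.2 = profile c i p.2

variable {c}

theorem profile_of_notMem {j : Fin n} {a : α} (ha : a ∉ c j) : profile c j a = j + 2 :=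
  if_neg ha

theorem eq_of_profile_eq_add_two {i j : Fin n} {a : α} (h : profile c i a = j + 2) :
    i = j := by
  unfold profile at h
  apply Fin.ext
  split_ifs at h <;> omega

theorem profile_step {D : Set (α × α)} {f : α → ℕ}
    (hD : ProfiledOnEdges c D f)
    {j : Fin n} {x y : α} (hxy : (x, y) ∈ D) (hx : f x = j + 2) :
    f y = profile c j y := by
  obtain ⟨i, hix, hiy⟩ := hD _ hxy
  rwa [← eq_of_profile_eq_add_two (hix.symm.trans hx)]

theorem profile_of_isChain {D : Set (α × α)} {f : α → ℕ}
    (hD : ProfiledOnEdges c D f)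
    {j : Fin n} (p : List α) :
    ∀ {x y : α}, (x :: p).IsChain (fun a b => (a, b) ∈ D) →
      (∀ b ∈ (x :: p).dropLast, b ∉ c j) → (x :: p).getLast? = some y →
      f x = profile c j x → f y = profile c j y := by
  induction p with
  | nil =>
    intro x y _ _ hlast hx
    obtain rfl : x = y := by simpa using hlast
    exact hx
  | cons b p ih =>
    intro x y hchain hdrop hlast hx
    rw [List.isChain_cons_cons] at hchain
    rw [List.dropLast_cons_cons] at hdrop
    rw [List.getLast?_cons_cons] at hlast
    have hxj : x ∉ c j := hdrop x List.mem_cons_self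
    refine ih hchain.2 (fun b' hb' => hdrop b' (List.mem_cons_of_mem _ hb')) hlast ?_
    exact profile_step hD hchain.1 (hx.trans (profile_of_notMem hxj))

theorem profile_of_mem_crSet {D : Set (α × α)} {f : α → ℕ}
    (hD : ProfiledOnEdges c D f)
    {S : Set α} {j : Fin n} (hS : ∀ a ∈ S, f a = profile c j a) {y : α}
    (hj : j ∈ CrSet c D S y) : f y = profile c j y := by
  obtain ⟨x, hxS, p, ⟨-, hhead, hlast, hchain⟩, hdrop⟩ := hj
  obtain ⟨q, rfl⟩ : ∃ q, p = x :: q := by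
    cases p with
    | nil => simp at hhead
    | cons a q => exact ⟨q, by simpa using hhead⟩
  exact profile_of_isChain hD q hchain hdrop hlast (hS x hxS)

end Profile

section Lcand

variable {α : Type} [DecidableEq α] {n m : ℕ} {c : Fin n → Set α}
  {σ : Fin m → α}

theorem mem_Lword_iff_count_eq_profile (hσ : Function.Surjective σ) {s : List α}
    {j : Fin n} : s ∈ Lword σ (c j) j ↔ ∀ a, s.count a = profile c j a := by
  refine ⟨fun hs a => ?_, fun hs i => ⟨fun hi => ?_, fun hi => ?_⟩⟩
  · obtain ⟨i, rfl⟩ := hσ a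
    unfold profile
    split_ifs with hi
    exacts [(hs i).1 hi, (hs i).2 hi]
  · rw [hs, profile, if_pos hi]
  · rw [hs, profile_of_notMem hi]

theorem exists_profile_of_mem_preimage_projA_image_Lcand [Fintype α]
    (hσ : Function.Surjective σ) {T : Set α} {s : List α}
    (hs : s ∈ projA T ⁻¹' (projA T '' Lcand c σ)) :
    ∃ j, ∀ a ∈ T, s.count a = profile c j a := by
  obtain ⟨s', hs', hproj⟩ := hs
  obtain ⟨j, hj⟩ := Set.mem_iUnion.1 hs'
  refine ⟨j, fun a ha => ?_⟩
  rw [← count_projA_of_mem ha, ← hproj, count_projA_of_mem ha]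
  exact (mem_Lword_iff_count_eq_profile hσ).1 hj a

end Lcand

theorem statement_6_general {α : Type} [Fintype α] [DecidableEq α] (Δ Δ' : Distr α)
    (n m : ℕ) (c : Fin n → Set α)
    (σ : Fin m → α) (hσ : Function.Bijective σ)
    (h : ∃ S ∈ Δ'.comps, S ∉ Δ.comps ∧
      ∀ y : α, y ∉ S → CrSet c (DepRel Δ') S y = Set.univ) :
    Decomposable (Lcand c σ) Δ' := by
  obtain ⟨S, hS, -, hCr⟩ := h
  refine decomposable_iff_iInter_subset.2 fun s hs => ?_
  have hcomp : ∀ T ∈ Δ'.comps, ∃ j, ∀ a ∈ T, s.count a = profile c j a := fun T hT =>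
    exists_profile_of_mem_preimage_projA_image_Lcand hσ.2 (Set.mem_iInter₂.1 hs T hT)
  have hD : ProfiledOnEdges c (DepRel Δ') s.count := by
    rintro p ⟨T, hT, h1, h2⟩
    obtain ⟨j, hj⟩ := hcomp T hT
    exact ⟨j, hj _ h1, hj _ h2⟩
  obtain ⟨j, hj⟩ := hcomp S hS
  refine Set.mem_iUnion.2 ⟨j, (mem_Lword_iff_count_eq_profile hσ.2).2 fun y => ?_⟩
  by_cases hy : y ∈ S
  · exact hj y hy
  · exact profile_of_mem_crSet hD hj (hCr y hy ▸ Set.mem_univ j)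

/-- If `Δ' ∈ M(Δ)` has a component `S` that is not a
component of `Δ` with `Cr_{Δ'}(S, σ') = [1, n]` for every `σ' ∈ Σ − S`
(with `N` determined by `Δ` and simple paths in `(Σ, D_{Δ'})`), then
`L_cand` is decomposable with respect to `Δ'`. -/
theorem statement_6 {α : Type} [Fintype α] [DecidableEq α] (Δ Δ' : Distr α)
    (hM : MergedFrom Δ' Δ)
    (n m : ℕ) (c : Fin n → Set α)
    (hc1 : Function.Injective c) (hc2 : Set.range c = Δ.comps)
    (σ : Fin m → α) (hσ : Function.Bijective σ)
    (h : ∃ S ∈ Δ'.comps, S ∉ Δ.comps ∧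
      ∀ y : α, y ∉ S → CrSet c (DepRel Δ') S y = Set.univ) :
    Decomposable (Lcand c σ) Δ' :=
  statement_6_general Δ Δ' n m c σ hσ h
end
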